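/- arXiv:1803.09408 — 3 statements merged into one kernel-verified Lean document; each statement's English description precedes it below -/
import Mathlib

section
/- Let ℳ be a finite set of cardinality M ≥ 1. For each m ∈ ℳ let 𝒟_m be a nonempty finite set of files, let 𝒩_R = ⋃_{m∈ℳ} 𝒟_m with N_R = |𝒩_R|, D_m = |𝒟_m|, ℳ(n) = {m ∈ ℳ : n ∈ 𝒟_m}, and σ_m = |{n ∈ 𝒟_m : ℳ(n) = {m}}|. Let N, α be naturals with 1 ≤ α ≤ N and N_R ≤ N, and let δ, Δ, N_DEL be arbitrary real numbers. Define the real quantities: T_I = M·N_R·(C(N−1,α−1) − C(N_R−1,α−1)); T_II = Σ_{m∈ℳ} C(N_R−D_m,α−1)·D_m·(α−1) + Σ_{n∈𝒩_R} (|ℳ(n)|−1)·min_{m∈ℳ(n)} C(N_R−D_m,α−1); T_II^RM = Σ_{n∈𝒩_R} Σ_{m∈ℳ(n)} (C(N_R−D_m,α−1) − min_{m'∈ℳ(n)} C(N_R−D_{m'},α−1)); L_m = Σ_{n=2}^{min(D_m,α)} C(D_m−σ_m,n)·C(N_R−D_m,α−n); T_III = Σ_{m∈ℳ} Σ_{n=2}^{min(D_m,α)}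 C(D_m,n)·C(N_R−D_m,α−n)·(α−1) + (M−1)·min_{m∈ℳ} L_m; T_III^RM = Σ_{m∈ℳ} L_m − M·min_{m∈ℳ} L_m; T_IV = Σ_{m∈ℳ} C(N_R−D_m,α)·(α−1) + N_DEL − δ; T_IV^RM = Σ_{m∈ℳ} C(N_R−D_m,α) − N_DEL. Then (T_I + T_II + T_II^RM + T_III + T_III^RM + T_IV + T_IV^RM − Δ) / (M·C(N−1,α−1)) = N_R − Σ_{n∈𝒩_R} min_{m∈ℳ(n)} C(N_R−D_m,α−1)/(M·C(N−1,α−1)) + Σ_{m∈ℳ} Σ_{n=2}^{min(D_m,α)} (C(D_m−σ_m,n) − C(D_m,n))·C(N_R−D_m,α−n)/(M·C(N−1,α−1)) − min_{m∈ℳ} Σ_{n=2}^{min(D_m,α)} C(D_m−σ_m,n)·C(N_R−D_m,α−n)/(M·C(N−1,α−1)) − (δ+Δ)/(M·C(N−1,α−1)). -/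
open Finset

lemma key_nat (NR Dm α : ℕ) (hα : 1 ≤ α) (hD : Dm ≤ NR) (hNR : 1 ≤ NR) :
    α * (Dm * Nat.choose (NR - Dm) (α - 1)
      + (∑ k ∈ Icc 2 (min Dm α), Nat.choose Dm k * Nat.choose (NR - Dm) (α - k))
      + Nat.choose (NR - Dm) α) = NR * Nat.choose (NR - 1) (α - 1) := by
  have hV : Nat.choose NR α = ∑ k ∈ range (α + 1), Nat.choose Dm k * Nat.choose (NR - Dm) (α - k) := by
    have := Nat.add_choose_eq Dm (NR - Dm) α
    rw [Nat.add_sub_cancel' hD] at this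
    rw [this, Nat.sum_antidiagonal_eq_sum_range_succ_mk]
  have hsplit : range (α + 1) = insert 0 (insert 1 (Icc 2 α)) := by
    ext x; simp; omega
  have hIcc : ∑ k ∈ Icc 2 (min Dm α), Nat.choose Dm k * Nat.choose (NR - Dm) (α - k)
      = ∑ k ∈ Icc 2 α, Nat.choose Dm k * Nat.choose (NR - Dm) (α - k) := by
    apply Finset.sum_subset
    · apply Finset.Icc_subset_Icc_right; omega
    · intro x hx hnx
      simp only [mem_Icc] at hx hnx
      have : Dm < x := by omega
      rw [Nat.choose_eq_zero_of_lt this, zero_mul]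
  have hmul : NR * Nat.choose (NR - 1) (α - 1) = α * Nat.choose NR α := by
    have := Nat.add_one_mul_choose_eq (NR - 1) (α - 1)
    simp only [Nat.succ_eq_add_one, Nat.sub_add_cancel hNR, Nat.sub_add_cancel hα] at this
    rw [this]; ring
  rw [hmul, hV, hsplit, Finset.sum_insert (by simp), Finset.sum_insert (by simp), hIcc]
  simp only [Nat.choose_zero_right, Nat.choose_one_right, Nat.sub_zero, one_mul]
  ring



/-- Minimum of `f` over a finite set `s` (0 if `s` is empty; in the statement
below it is only applied to nonempty sets). -/
def natMin {ι : Type*} (s : Finset ι) (f : ι → ℕ) : ℕ :=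
  if h : s.Nonempty then s.inf' h f else 0

/-- Theorem 1: the total delivery rate
`(T_I + T_II + T_II^RM + T_III + T_III^RM + T_IV + T_IV^RM - Δ)/(M·C(N-1,α-1))`
equals the stated closed form. -/
theorem stmt_5 {ι X : Type*} [Fintype ι] [Nonempty ι] [DecidableEq ι] [DecidableEq X]
    (M : ℕ) (hM : M = Fintype.card ι) (hM1 : 1 ≤ M)
    (𝒟 : ι → Finset X) (hne : ∀ m, (𝒟 m).Nonempty)
    (N α NR : ℕ) (hα : 1 ≤ α) (hαN : α ≤ N)
    (hNR : (Finset.univ.biUnion 𝒟).card = NR) (hNRN : NR ≤ N)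
    (δ Δ NDEL : ℝ) :
    let 𝒩R : Finset X := Finset.univ.biUnion 𝒟
    let D : ι → ℕ := fun m => (𝒟 m).card
    let ℳ : X → Finset ι := fun n => Finset.univ.filter (fun m => n ∈ 𝒟 m)
    let σ : ι → ℕ := fun m => ((𝒟 m).filter (fun n => ℳ n = {m})).card
    -- min_{m ∈ ℳ(n)} C(N_R - D_m, α-1)
    let mc : X → ℕ := fun n => natMin (ℳ n) (fun m => Nat.choose (NR - D m) (α - 1))
    -- L_m^(UnTr)
    let L : ι → ℕ := fun m => ∑ k ∈ Finset.Icc 2 (min (D m) α),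
        Nat.choose (D m - σ m) k * Nat.choose (NR - D m) (α - k)
    let TI : ℝ := (M : ℝ) * NR *
        ((Nat.choose (N - 1) (α - 1) : ℝ) - (Nat.choose (NR - 1) (α - 1) : ℝ))
    let TII : ℝ :=
        ((∑ m : ι, Nat.choose (NR - D m) (α - 1) * D m * (α - 1) : ℕ) : ℝ)
        + ∑ n ∈ 𝒩R, (((ℳ n).card : ℝ) - 1) * (mc n : ℝ)
    let TIIRM : ℝ := ∑ n ∈ 𝒩R, ∑ m ∈ ℳ n,
        ((Nat.choose (NR - D m) (α - 1) : ℝ) - (mc n : ℝ))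
    let TIII : ℝ :=
        ((∑ m : ι, ∑ k ∈ Finset.Icc 2 (min (D m) α),
            Nat.choose (D m) k * Nat.choose (NR - D m) (α - k) * (α - 1) : ℕ) : ℝ)
        + ((M : ℝ) - 1) * (natMin Finset.univ L : ℝ)
    let TIIIRM : ℝ := ((∑ m : ι, L m : ℕ) : ℝ) - (M : ℝ) * (natMin Finset.univ L : ℝ)
    let TIV : ℝ := ((∑ m : ι, Nat.choose (NR - D m) α * (α - 1) : ℕ) : ℝ) + NDEL - δ
    let TIVRM : ℝ := ((∑ m : ι, Nat.choose (NR - D m) α : ℕ) : ℝ) - NDEL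
    (TI + TII + TIIRM + TIII + TIIIRM + TIV + TIVRM - Δ)
        / ((M : ℝ) * (Nat.choose (N - 1) (α - 1) : ℝ))
      = (NR : ℝ)
        - (∑ n ∈ 𝒩R, (mc n : ℝ)) / ((M : ℝ) * (Nat.choose (N - 1) (α - 1) : ℝ))
        + (∑ m : ι, ∑ k ∈ Finset.Icc 2 (min (D m) α),
              ((Nat.choose (D m - σ m) k : ℝ) - (Nat.choose (D m) k : ℝ))
                * (Nat.choose (NR - D m) (α - k) : ℝ))
          / ((M : ℝ) * (Nat.choose (N - 1) (α - 1) : ℝ))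
        - (natMin Finset.univ L : ℝ)
          / ((M : ℝ) * (Nat.choose (N - 1) (α - 1) : ℝ))
        - (δ + Δ) / ((M : ℝ) * (Nat.choose (N - 1) (α - 1) : ℝ)) := by
  intro 𝒩R D ℳ σ mc L TI TII TIIRM TIII TIIIRM TIV TIVRM
  have hsub : ∀ m, 𝒟 m ⊆ 𝒩R := fun m x hx => Finset.mem_biUnion.2 ⟨m, Finset.mem_univ m, hx⟩
  have hNR1 : 1 ≤ NR := by
    rw [← hNR]
    have : (𝒟 (Classical.arbitrary ι)).Nonempty := hne _
    exact Finset.card_pos.2 (this.mono (hsub _))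
  have hDle : ∀ m, D m ≤ NR := fun m => by
    rw [← hNR]; exact Finset.card_le_card (hsub m)
  have hden : (M : ℝ) * (Nat.choose (N - 1) (α - 1) : ℝ) ≠ 0 := by
    have h1 : 0 < M := hM1
    have h2 : 0 < Nat.choose (N - 1) (α - 1) := Nat.choose_pos (by omega)
    have : 0 < M * Nat.choose (N - 1) (α - 1) := Nat.mul_pos h1 h2
    exact_mod_cast this.ne'
  have hswap : (∑ n ∈ 𝒩R, ∑ m ∈ ℳ n, ((Nat.choose (NR - D m) (α - 1) : ℕ) : ℝ))
      = ∑ m : ι, (Nat.choose (NR - D m) (α - 1) : ℝ) * (D m : ℝ) := by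
    simp only [ℳ, Finset.sum_filter]
    rw [Finset.sum_comm]
    refine Finset.sum_congr rfl fun m _ => ?_
    rw [Finset.sum_ite_mem, Finset.inter_eq_right.2 (hsub m), Finset.sum_const,
      nsmul_eq_mul]
    simp only [D]; ring
  have hper : ∀ m : ι, ((Nat.choose (NR - D m) (α - 1) : ℝ) * (D m : ℝ)
      + (∑ k ∈ Finset.Icc 2 (min (D m) α),
          (Nat.choose (D m) k : ℝ) * (Nat.choose (NR - D m) (α - k) : ℝ))
      + (Nat.choose (NR - D m) α : ℝ)) * (α : ℝ)
      = (NR : ℝ) * (Nat.choose (NR - 1) (α - 1) : ℝ) := by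
    intro m
    have h := congrArg (Nat.cast : ℕ → ℝ) (key_nat NR (D m) α hα (hDle m) hNR1)
    push_cast at h
    linear_combination h
  have hkeysum : ((∑ m : ι, (Nat.choose (NR - D m) (α - 1) : ℝ) * (D m : ℝ))
      + (∑ m : ι, ∑ k ∈ Finset.Icc 2 (min (D m) α),
          (Nat.choose (D m) k : ℝ) * (Nat.choose (NR - D m) (α - k) : ℝ))
      + ∑ m : ι, (Nat.choose (NR - D m) α : ℝ)) * (α : ℝ)
      = (M : ℝ) * (NR : ℝ) * (Nat.choose (NR - 1) (α - 1) : ℝ) := by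
    rw [← Finset.sum_add_distrib, ← Finset.sum_add_distrib, Finset.sum_mul,
      Finset.sum_congr rfl fun m _ => hper m, Finset.sum_const, nsmul_eq_mul,
      Finset.card_univ, ← hM]
    ring
  have hkey : TI + TII + TIIRM + TIII + TIIIRM + TIV + TIVRM - Δ
      = (NR : ℝ) * ((M : ℝ) * (Nat.choose (N - 1) (α - 1) : ℝ))
        - (∑ n ∈ 𝒩R, (mc n : ℝ))
        + (∑ m : ι, ∑ k ∈ Finset.Icc 2 (min (D m) α),
              ((Nat.choose (D m - σ m) k : ℝ) - (Nat.choose (D m) k : ℝ))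
                * (Nat.choose (NR - D m) (α - k) : ℝ))
        - (natMin Finset.univ L : ℝ) - (δ + Δ) := by
    simp only [TI, TII, TIIRM, TIII, TIIIRM, TIV, TIVRM, L]
    push_cast [Nat.cast_sub hα]
    simp only [Finset.sum_sub_distrib, Finset.sum_const, nsmul_eq_mul, sub_mul, one_mul,
      mul_sub, mul_one]
    simp only [← Finset.sum_mul]
    rw [hswap]
    linear_combination hkeysum
  rw [hkey]
  field_simp
  have hc : ((Nat.choose (N - 1) (α - 1) : ℕ) : ℝ) ≠ 0 := by exact_mod_cast (Nat.choose_pos (by omega)).ne'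
  field_simp
end

section
/- Let 𝒩 be a finite set with |𝒩| = N ≥ 1, let ℳ be a finite index set, and for each m ∈ ℳ let 𝒟_m ⊆ 𝒩 be nonempty with ⋃_{m∈ℳ} 𝒟_m = 𝒩; write D_m = |𝒟_m| and ℳ(n) = {m ∈ ℳ : n ∈ 𝒟_m}. Let α be a natural number with 1 ≤ α ≤ N. Let m_1, …, m_{I+1} ∈ ℳ be distinct indices with D_{m_1} ≥ D_{m_2} ≥ … ≥ D_{m_{I+1}} ≥ D_m for every m ∈ ℳ \ {m_1,…,m_{I+1}}, and suppose Σ_{i=1}^{I} D_{m_i} ≤ N < Σ_{i=1}^{I+1} D_{m_i}. Then Σ_{n∈𝒩} min_{m∈ℳ(n)} C(N−D_m, α−1) ≥ Σ_{i=1}^{I} D_{m_i}·C(N−D_{m_i}, α−1) + (N − Σ_{i=1}^{I} D_{m_i})·C(N−D_{m_{I+1}}, α−1). -/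
/-- Layer-cake bound: the sum of increments `H (i+1) - H i` over the layers
with `H (i+1) ≤ g` is at most `min (H M) g`, for monotone `H` with `H 0 = 0`. -/
lemma layer_sum (H : ℕ → ℕ) (hH : Monotone H) (h0 : H 0 = 0) (g : ℕ) :
    ∀ M, (∑ i ∈ Finset.range M, if H (i + 1) ≤ g then H (i + 1) - H i else 0)
        ≤ H M
      ∧ (∑ i ∈ Finset.range M, if H (i + 1) ≤ g then H (i + 1) - H i else 0)
        ≤ g := by
  intro M
  induction M with
  | zero => simp [h0]
  | succ M ih =>
    obtain ⟨ih1, ih2⟩ := ih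
    have h1 : H M ≤ H (M + 1) := hH (Nat.le_succ M)
    show _ ≤ H (M + 1) ∧ _
    rw [Finset.sum_range_succ]
    constructor <;> (split <;> omega)

/-- Abel-summation identity in `ℕ`. -/
lemma abel_sum (H D : ℕ → ℕ) (hH : Monotone H) (h0 : H 0 = 0) (N : ℕ) :
    ∀ I, (∑ j ∈ Finset.range I, D j) ≤ N →
      ∑ i ∈ Finset.range (I + 1),
          (H (i + 1) - H i) * (N - ∑ j ∈ Finset.range i, D j)
        = ∑ i ∈ Finset.range I, D i * H (i + 1)
          + (N - ∑ j ∈ Finset.range I, D j) * H (I + 1) := by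
  intro I
  induction I with
  | zero => simp [h0, Nat.mul_comm]
  | succ I ih =>
    intro hS
    have hSS : (∑ j ∈ Finset.range (I + 1), D j)
        = (∑ j ∈ Finset.range I, D j) + D I := Finset.sum_range_succ D I
    have hS' : (∑ j ∈ Finset.range I, D j) ≤ N := by omega
    rw [Finset.sum_range_succ
      (fun i => (H (i + 1) - H i) * (N - ∑ j ∈ Finset.range i, D j)),
      ih hS', Finset.sum_range_succ (fun i => D i * H (i + 1))]
    have key : ∀ a B h1 h2 : ℕ, h1 ≤ h2 →
        (B + a) * h1 + (h2 - h1) * B = a * h1 + B * h2 := by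
      intro a B h1 h2 h
      obtain ⟨k, rfl⟩ := Nat.le.dest h
      simp only [Nat.add_sub_cancel_left]
      ring
    have hA : N - (∑ j ∈ Finset.range I, D j)
        = (N - ∑ j ∈ Finset.range (I + 1), D j) + D I := by omega
    have heq : (N - ∑ j ∈ Finset.range I, D j) * H (I + 1)
        + (H (I + 1 + 1) - H (I + 1)) * (N - ∑ j ∈ Finset.range (I + 1), D j)
        = D I * H (I + 1)
          + (N - ∑ j ∈ Finset.range (I + 1), D j) * H (I + 1 + 1) := by
      rw [hA]
      exact key _ _ _ _ (hH (Nat.le_succ (I + 1)))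
    omega

/-- lower bound on the total number of reference fragments
`Σ_{n∈𝒩} min_{m∈ℳ(n)} C(N-D_m, α-1)` in terms of the `I+1` groups with the
largest numbers of distinct requests. -/
theorem stmt_7 {ι X : Type*} [Fintype ι] [DecidableEq X]
    (𝒩 : Finset X) (N : ℕ) (hN : 𝒩.card = N) (hN1 : 1 ≤ N)
    (𝒟 : ι → Finset X) (hne : ∀ m, (𝒟 m).Nonempty) (hsub : ∀ m, 𝒟 m ⊆ 𝒩)
    (hcov : Finset.univ.biUnion 𝒟 = 𝒩)
    (α : ℕ) (hα : 1 ≤ α) (hαN : α ≤ N)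
    (I : ℕ) (ms : ℕ → ι) (hinj : Set.InjOn ms (Set.Iio (I + 1)))
    (hdec : ∀ i j, i ≤ j → j ≤ I → (𝒟 (ms j)).card ≤ (𝒟 (ms i)).card)
    (hout : ∀ m, m ∉ ms '' Set.Iio (I + 1) → (𝒟 m).card ≤ (𝒟 (ms I)).card)
    (hsum1 : ∑ i ∈ Finset.range I, (𝒟 (ms i)).card ≤ N)
    (hsum2 : N < ∑ i ∈ Finset.range (I + 1), (𝒟 (ms i)).card) :
    ∑ i ∈ Finset.range I,
        (𝒟 (ms i)).card * Nat.choose (N - (𝒟 (ms i)).card) (α - 1)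
      + (N - ∑ i ∈ Finset.range I, (𝒟 (ms i)).card)
        * Nat.choose (N - (𝒟 (ms I)).card) (α - 1)
      ≤ ∑ n ∈ 𝒩, natMin (Finset.univ.filter (fun m => n ∈ 𝒟 m))
          (fun m => Nat.choose (N - (𝒟 m).card) (α - 1)) := by
  classical
  set f : ι → ℕ := fun m => Nat.choose (N - (𝒟 m).card) (α - 1) with hf
  have fmono : ∀ m m', (𝒟 m').card ≤ (𝒟 m).card → f m ≤ f m' := by
    intro m m' h
    exact Nat.choose_le_choose _ (Nat.sub_le_sub_left h N)
  set g : X → ℕ := fun n =>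
    natMin (Finset.univ.filter (fun m => n ∈ 𝒟 m)) f with hg
  set H : ℕ → ℕ := fun i => if i = 0 then 0 else f (ms (min (i - 1) I)) with hH
  have hH0 : H 0 = 0 := by simp [hH]
  have hHmono : Monotone H := by
    intro i j hij
    rcases Nat.eq_zero_or_pos i with rfl | hi
    · simp [hH0]
    · have hi' : i ≠ 0 := by omega
      have hj' : j ≠ 0 := by omega
      simp only [hH, if_neg hi', if_neg hj']
      exact fmono _ _ (hdec _ _ (by omega) (min_le_right _ _))
  have hHi : ∀ i, i ≤ I → H (i + 1) = f (ms i) := by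
    intro i hi
    simp only [hH, if_neg (Nat.succ_ne_zero i), Nat.add_sub_cancel,
      min_eq_left hi]
  have hfil : ∀ n ∈ 𝒩, (Finset.univ.filter (fun m => n ∈ 𝒟 m)).Nonempty := by
    intro n hn
    rw [← hcov] at hn
    obtain ⟨m, -, hm⟩ := Finset.mem_biUnion.mp hn
    exact ⟨m, Finset.mem_filter.mpr ⟨Finset.mem_univ m, hm⟩⟩
  -- covering claim
  have hC : ∀ i, i ≤ I →
      (𝒩.filter (fun n => g n < f (ms i))).card
        ≤ ∑ j ∈ Finset.range i, (𝒟 (ms j)).card := by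
    intro i hi
    have hsub2 : (𝒩.filter (fun n => g n < f (ms i))) ⊆
        (Finset.range i).biUnion (fun j => 𝒟 (ms j)) := by
      intro n hn
      obtain ⟨hn𝒩, hlt⟩ := Finset.mem_filter.mp hn
      have hne' := hfil n hn𝒩
      have hgeq : g n = (Finset.univ.filter (fun m => n ∈ 𝒟 m)).inf' hne' f := by
        simp [hg, natMin, hne']
      obtain ⟨m, hm, hmeq⟩ := Finset.exists_mem_eq_inf' hne' f
      rw [hgeq, hmeq] at hlt
      have hDm : (𝒟 (ms i)).card < (𝒟 m).card := by
        by_contra h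
        exact absurd (fmono (ms i) m (by omega)) (by omega)
      have hmem : m ∈ ms '' Set.Iio (I + 1) := by
        by_contra h
        have := hout m h
        have := hdec i I hi le_rfl
        omega
      obtain ⟨j, hj, rfl⟩ := hmem
      have hj' : j < I + 1 := hj
      have hji : j < i := by
        by_contra h
        have := hdec i j (by omega) (by omega)
        omega
      exact Finset.mem_biUnion.mpr
        ⟨j, Finset.mem_range.mpr hji, (Finset.mem_filter.mp hm).2⟩
    calc (𝒩.filter (fun n => g n < f (ms i))).card
        ≤ ((Finset.range i).biUnion (fun j => 𝒟 (ms j))).card :=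
          Finset.card_le_card hsub2
      _ ≤ ∑ j ∈ Finset.range i, (𝒟 (ms j)).card := Finset.card_biUnion_le
  -- main chain
  have key : ∑ i ∈ Finset.range (I + 1),
      (H (i + 1) - H i) * (N - ∑ j ∈ Finset.range i, (𝒟 (ms j)).card)
      ≤ ∑ n ∈ 𝒩, g n := by
    calc ∑ i ∈ Finset.range (I + 1),
        (H (i + 1) - H i) * (N - ∑ j ∈ Finset.range i, (𝒟 (ms j)).card)
        ≤ ∑ i ∈ Finset.range (I + 1),
            (H (i + 1) - H i) * (𝒩.filter (fun n => H (i + 1) ≤ g n)).card := by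
          apply Finset.sum_le_sum
          intro i hi
          have hiI : i ≤ I := by
            have := Finset.mem_range.mp hi; omega
          apply Nat.mul_le_mul_left
          have h1 : (𝒩.filter (fun n => H (i + 1) ≤ g n)).card
              + (𝒩.filter (fun n => ¬ H (i + 1) ≤ g n)).card = N := by
            rw [Finset.card_filter_add_card_filter_not, hN]
          have h2 : (𝒩.filter (fun n => ¬ H (i + 1) ≤ g n)).card
              ≤ ∑ j ∈ Finset.range i, (𝒟 (ms j)).card := by
            have := hC i hiI
            simp only [not_le, hHi i hiI]
            exact this
          omega
      _ = ∑ i ∈ Finset.range (I + 1), ∑ n ∈ 𝒩,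
            (if H (i + 1) ≤ g n then H (i + 1) - H i else 0) := by
          apply Finset.sum_congr rfl
          intro i _
          rw [← Finset.sum_filter, Finset.sum_const, smul_eq_mul, mul_comm]
      _ = ∑ n ∈ 𝒩, ∑ i ∈ Finset.range (I + 1),
            (if H (i + 1) ≤ g n then H (i + 1) - H i else 0) :=
          Finset.sum_comm
      _ ≤ ∑ n ∈ 𝒩, g n := by
          apply Finset.sum_le_sum
          intro n _
          exact (layer_sum H hHmono hH0 (g n) (I + 1)).2
  have habel := abel_sum H (fun j => (𝒟 (ms j)).card) hHmono hH0 N I hsum1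
  calc ∑ i ∈ Finset.range I,
        (𝒟 (ms i)).card * Nat.choose (N - (𝒟 (ms i)).card) (α - 1)
      + (N - ∑ i ∈ Finset.range I, (𝒟 (ms i)).card)
        * Nat.choose (N - (𝒟 (ms I)).card) (α - 1)
      = ∑ i ∈ Finset.range I, (𝒟 (ms i)).card * H (i + 1)
        + (N - ∑ j ∈ Finset.range I, (𝒟 (ms j)).card) * H (I + 1) := by
        congr 1
        · apply Finset.sum_congr rfl
          intro i hi
          rw [hHi i (le_of_lt (Finset.mem_range.mp hi))]
        · rw [hHi I le_rfl]
    _ = ∑ i ∈ Finset.range (I + 1),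
          (H (i + 1) - H i) * (N - ∑ j ∈ Finset.range i, (𝒟 (ms j)).card) :=
        habel.symm
    _ ≤ ∑ n ∈ 𝒩, g n := key
end

section
/- For natural numbers α, N, L, M with 1 ≤ α ≤ N, 2 ≤ L ≤ N and M·L > N, the following holds over the rationals. Define G = [N·C(N−L,α−1) + Σ_{n=2}^{min(L,α)} C(L,n)·C(N−L,α−n) + C(N−L,α)] / (M·C(N−1,α−1)). Then (a) G = (N−L)·C(N−L,α−1)/(M·C(N−1,α−1)) + N/(M·α), and (b) G ≥ N/(M·α), so that N − (G + max(0, N/(M·α) − G)) = N − (N−L)·C(N−L,α−1)/(M·C(N−1,α−1)) − N/(M·α). -/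
lemma stmt9_vander (α L m : ℕ) (hα : 1 ≤ α) :
    (L + m).choose α = m.choose α + L * m.choose (α - 1)
      + ∑ k ∈ Finset.Icc 2 (min L α), L.choose k * m.choose (α - k) := by
  rw [Nat.add_choose_eq, Finset.Nat.sum_antidiagonal_eq_sum_range_succ_mk]
  have hset : Finset.range (α + 1) = insert 0 (insert 1 (Finset.Icc 2 α)) := by
    ext x; simp [Finset.mem_range, Finset.mem_insert, Finset.mem_Icc]; omega
  rw [hset, Finset.sum_insert (by simp), Finset.sum_insert (by simp [Finset.mem_Icc])]
  have hsub : ∑ k ∈ Finset.Icc 2 α, L.choose k * m.choose (α - k)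
      = ∑ k ∈ Finset.Icc 2 (min L α), L.choose k * m.choose (α - k) := by
    refine (Finset.sum_subset ?_ ?_).symm
    · intro x hx; simp only [Finset.mem_Icc] at *; omega
    · intro x hx hx'
      simp only [Finset.mem_Icc] at hx hx'
      have : L < x := by omega
      simp [Nat.choose_eq_zero_of_lt this]
  simp only [Nat.choose_zero_right, Nat.choose_one_right, one_mul, Nat.sub_zero]
  rw [hsub]
  ring

/-- Corollary 3, `L ≥ 2` branch: with uniform requests `L`,
the quantity `G` simplifies to `(N-L)C(N-L,α-1)/(M C(N-1,α-1)) + N/(Mα)`,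
satisfies `G ≥ N/(Mα)`, and hence the worst rate equals
`N - (N-L)C(N-L,α-1)/(M C(N-1,α-1)) - N/(Mα)`. -/
theorem stmt_9 (α N L M : ℕ) (hα : 1 ≤ α) (hαN : α ≤ N) (hL2 : 2 ≤ L)
    (hLN : L ≤ N) (hML : N < M * L) :
    let G : ℚ := ((N : ℚ) * Nat.choose (N - L) (α - 1)
        + ∑ k ∈ Finset.Icc 2 (min L α),
            ((Nat.choose L k : ℚ) * Nat.choose (N - L) (α - k))
        + Nat.choose (N - L) α) / ((M : ℚ) * Nat.choose (N - 1) (α - 1))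
    (G = ((N : ℚ) - (L : ℚ)) * Nat.choose (N - L) (α - 1)
          / ((M : ℚ) * Nat.choose (N - 1) (α - 1))
        + (N : ℚ) / ((M : ℚ) * (α : ℚ))) ∧
      ((N : ℚ) / ((M : ℚ) * (α : ℚ)) ≤ G) ∧
      ((N : ℚ) - (G + max 0 ((N : ℚ) / ((M : ℚ) * (α : ℚ)) - G))
        = (N : ℚ) - ((N : ℚ) - (L : ℚ)) * Nat.choose (N - L) (α - 1)
            / ((M : ℚ) * Nat.choose (N - 1) (α - 1))
          - (N : ℚ) / ((M : ℚ) * (α : ℚ))) := by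
  intro G
  have hM : 0 < M := by nlinarith
  have hCpos : 0 < (N - 1).choose (α - 1) := Nat.choose_pos (by omega)
  have hMQ : (M : ℚ) ≠ 0 := by positivity
  have hαQ : (α : ℚ) ≠ 0 := by positivity
  have hCQ : ((N - 1).choose (α - 1) : ℚ) ≠ 0 := by exact_mod_cast hCpos.ne'
  -- key: α * C(N,α) = N * C(N-1,α-1)
  have hC : (α : ℚ) * (N.choose α : ℚ) = (N : ℚ) * ((N - 1).choose (α - 1) : ℚ) := by
    have h := Nat.add_one_mul_choose_eq (N - 1) (α - 1)
    rw [show N - 1 + 1 = N by omega, show α - 1 + 1 = α by omega] at h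
    have h' := congrArg (Nat.cast : ℕ → ℚ) h
    push_cast at h'
    linarith
  -- Vandermonde
  have hV : (N.choose α : ℚ) = ((N - L).choose α : ℚ)
      + (L : ℚ) * ((N - L).choose (α - 1) : ℚ)
      + ∑ k ∈ Finset.Icc 2 (min L α), ((L.choose k : ℚ) * ((N - L).choose (α - k) : ℚ)) := by
    have h := stmt9_vander α L (N - L) hα
    have hN : L + (N - L) = N := by omega
    rw [hN] at h
    push_cast [h]
    ring
  have hnum : (N : ℚ) * Nat.choose (N - L) (α - 1)
        + ∑ k ∈ Finset.Icc 2 (min L α),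
            ((Nat.choose L k : ℚ) * Nat.choose (N - L) (α - k))
        + Nat.choose (N - L) α
      = ((N : ℚ) - (L : ℚ)) * Nat.choose (N - L) (α - 1) + N.choose α := by
    linear_combination -hV
  have h2 : (N.choose α : ℚ) / ((M : ℚ) * ((N - 1).choose (α - 1) : ℚ))
      = (N : ℚ) / ((M : ℚ) * (α : ℚ)) := by
    rw [div_eq_div_iff (by positivity) (by positivity)]
    linear_combination (M : ℚ) * hC
  have hG : G = ((N : ℚ) - (L : ℚ)) * Nat.choose (N - L) (α - 1)
        / ((M : ℚ) * Nat.choose (N - 1) (α - 1))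
      + (N : ℚ) / ((M : ℚ) * (α : ℚ)) := by
    show (_ + _ + _) / _ = _
    rw [hnum, add_div, h2]
  have hA : 0 ≤ ((N : ℚ) - (L : ℚ)) * Nat.choose (N - L) (α - 1)
      / ((M : ℚ) * Nat.choose (N - 1) (α - 1)) := by
    apply div_nonneg
    · apply mul_nonneg
      · have : (L:ℚ) ≤ N := by exact_mod_cast hLN
        linarith
      · positivity
    · positivity
  refine ⟨hG, ?_, ?_⟩
  · rw [hG]; exact le_add_of_nonneg_left hA
  · have hle : (N : ℚ) / ((M : ℚ) * (α : ℚ)) - G ≤ 0 := by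
      rw [hG]; linarith
    rw [max_eq_left hle, add_zero, hG]; ring
end
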